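/- arXiv:1711.01787 — 2 statements merged into one kernel-verified Lean document; each statement's English description precedes it below -/
import Mathlib

section
/- If K ⊆ L are convex bodies in R^n in John's position, then the contact pairs (u_i, v_i)_{i=1}^m can be chosen so that no u_i lies in the convex hull of the other u_j's and no v_i lies in the convex hull of the other v_j's. -/
open Pointwise

noncomputable section

/-- Euclidean space ℝⁿ. -/
abbrev E (n : ℕ) := EuclideanSpace ℝ (Fin n)

/-- A convex body: compact, convex, with nonempty interior. -/
def IsConvexBody {n : ℕ} (K : Set (E n)) : Prop :=
  IsCompact K ∧ Convex ℝ K ∧ (interior K).Nonempty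

/-- The polar body `K° = {x : ⟨x, y⟩ ≤ 1 for all y ∈ K}`. -/
def polarBody {n : ℕ} (K : Set (E n)) : Set (E n) :=
  {x | ∀ y ∈ K, (inner ℝ x y : ℝ) ≤ 1}

/-- The Banach-Mazur distance:
`inf {r > 0 : K + u ⊆ T(L + v) ⊆ r(K + u)}` over invertible linear `T` and
translations `u, v`. -/
def bmDist {n : ℕ} (K L : Set (E n)) : ℝ :=
  sInf {r : ℝ | 0 < r ∧ ∃ (T : E n ≃ₗ[ℝ] E n) (u v : E n),
    (u +ᵥ K) ⊆ (T : E n →ₗ[ℝ] E n) '' (v +ᵥ L) ∧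
    (T : E n →ₗ[ℝ] E n) '' (v +ᵥ L) ⊆ r • (u +ᵥ K)}

/-- The Grünbaum distance: `inf |r|` over nondegenerate affine images
`K'` of `K` and `L'` of `L` with `K' ⊆ L' ⊆ r • K'` (`r` possibly negative). -/
def grDist {n : ℕ} (K L : Set (E n)) : ℝ :=
  sInf {s : ℝ | ∃ (r : ℝ) (F G : E n ≃ᵃ[ℝ] E n), s = |r| ∧
    (F : E n → E n) '' K ⊆ (G : E n → E n) '' L ∧
    (G : E n → E n) '' L ⊆ r • ((F : E n → E n) '' K)}

/-- The conditions of John's decomposition for given contact pairs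
`(u i, v i)` and weights `a i`. -/
def IsJohnData {n : ℕ} (K L : Set (E n)) {m : ℕ}
    (u v : Fin m → E n) (a : Fin m → ℝ) : Prop :=
  (∀ i, u i ∈ frontier K ∩ frontier L) ∧
  (∀ i, v i ∈ frontier (polarBody K) ∩ frontier (polarBody L)) ∧
  (∀ i, 0 < a i) ∧
  (∀ x : E n, x = ∑ i, (a i * (inner ℝ x (v i) : ℝ)) • u i) ∧
  (∑ i, a i • u i = 0) ∧
  (∑ i, a i • v i = 0) ∧
  (∀ i, (inner ℝ (u i) (v i) : ℝ) = 1)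

/-- `K ⊆ L` are in John's position. -/
def IsJohnPosition {n : ℕ} (K L : Set (E n)) : Prop :=
  K ⊆ L ∧ ∃ (m : ℕ), 0 < m ∧ ∃ (u v : Fin m → E n) (a : Fin m → ℝ),
    IsJohnData K L u v a

/-- A triangle in the plane: the convex hull of three affinely
independent points. -/
def IsTriangle (K : Set (E 2)) : Prop :=
  ∃ p : Fin 3 → E 2, AffineIndependent ℝ p ∧ K = convexHull ℝ (Set.range p)

/-- A centrally symmetric set, with center `c`. -/
def IsCentrallySymmetric {n : ℕ} (L : Set (E n)) : Prop :=
  ∃ c : E n, ∀ x, x ∈ L ↔ (2 : ℝ) • c - x ∈ L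

/-!
If `u k = ∑ w i • u i` is a convex combination of the other contact points, then, since every
`u i` pairs to at most `1` with `v k` while `u k` pairs to exactly `1`, every `u i` with `w i > 0`
touches the same supporting hyperplane `{⟪·, v k⟫ = 1}`. Substituting for `u k` in John's
decomposition of the identity folds the `k`-th term into the others and replaces each `v i` by a
convex combination of `v i` and `v k`, which is again a contact point of both polars. The
decomposition is symmetric in `u` and `v`, so redundant `v k` are removed in the same way. Hence
John data with the fewest contact pairs have neither redundant `u i` nor redundant `v i`.
-/

open Set
open scoped RealInnerProductSpace

section InnerProductSpace

variable {V : Type*} [NormedAddCommGroup V] [InnerProductSpace ℝ V] {ι : Type*} [Fintype ι]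

theorem exists_weights_of_mem_convexHull_range {u : ι → V} {x : V}
    (h : x ∈ convexHull ℝ (range u)) :
    ∃ w : ι → ℝ, (∀ i, 0 ≤ w i) ∧ ∑ i, w i = 1 ∧ ∑ i, w i • u i = x := by
  classical
  have hu : range u = Fintype.linearCombination ℝ u '' range (fun i ↦ Pi.single i 1) := by
    rw [← range_comp]; congr 1; ext i; simp [Fintype.linearCombination_apply_single]
  rw [hu, ← LinearMap.image_convexHull, convexHull_rangle_single_eq_stdSimplex] at h
  obtain ⟨w, ⟨hw₀, hw₁⟩, rfl⟩ := h
  exact ⟨w, hw₀, hw₁, by simp [Fintype.linearCombination_apply]⟩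

theorem mul_eq_of_sum_mul_eq_one {w f : ι → ℝ} (hw₀ : ∀ i, 0 ≤ w i) (hw₁ : ∑ i, w i = 1)
    (hf : ∀ i, f i ≤ 1) (h : ∑ i, w i * f i = 1) (i : ι) : w i * f i = w i := by
  have hsum : ∑ j, w j * (1 - f j) = 0 := by
    simp only [mul_sub, mul_one, Finset.sum_sub_distrib, hw₁, h, sub_self]
  have := (Finset.sum_eq_zero_iff_of_nonneg fun j _ ↦
    mul_nonneg (hw₀ j) (sub_nonneg.2 (hf j))).1 hsum i (Finset.mem_univ i)
  linarith

theorem mem_frontier_of_inner_le_one {S : Set V} (hS : IsClosed S) {x y : V} (hx : x ∈ S)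
    (hy : ∀ z ∈ S, ⟪z, y⟫ ≤ 1) (hxy : ⟪x, y⟫ = 1) : x ∈ frontier S := by
  refine hS.frontier_eq ▸ ⟨hx, fun hint ↦ ?_⟩
  have hpath : Filter.Tendsto (fun t : ℝ ↦ x + t • y) (nhdsWithin 0 (Ioi 0)) (nhds x) :=
    ((continuous_const.add (continuous_id.smul continuous_const)).tendsto' 0 x
      (by simp)).mono_left nhdsWithin_le_nhds
  obtain ⟨t, htS, ht⟩ := ((hpath.eventually (mem_interior_iff_mem_nhds.1 hint)).and
    self_mem_nhdsWithin).exists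
  have hy0 : y ≠ 0 := by rintro rfl; simp at hxy
  have := hy _ htS
  rw [inner_add_left, real_inner_smul_left, hxy, real_inner_self_eq_norm_sq] at this
  have : 0 < t * ‖y‖ ^ 2 := mul_pos ht (pow_pos (norm_pos_iff.2 hy0) 2)
  linarith

structure IsIdentityDecomposition (u v : ι → V) (a : ι → ℝ) : Prop where
  pos : ∀ i, 0 < a i
  eq_sum : ∀ x, x = ∑ i, (a i * ⟪x, v i⟫) • u i
  sum_smul_left : ∑ i, a i • u i = 0
  sum_smul_right : ∑ i, a i • v i = 0
  inner_eq_one : ∀ i, ⟪u i, v i⟫ = 1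

theorem IsIdentityDecomposition.symm {u v : ι → V} {a : ι → ℝ}
    (hd : IsIdentityDecomposition u v a) : IsIdentityDecomposition v u a where
  pos := hd.pos
  eq_sum x := ext_inner_right ℝ fun y ↦ by
    conv_lhs => rw [hd.eq_sum y, inner_sum]
    simp only [sum_inner, real_inner_smul_right, real_inner_comm]
    exact Finset.sum_congr rfl fun i _ ↦ by ring
  sum_smul_left := hd.sum_smul_right
  sum_smul_right := hd.sum_smul_left
  inner_eq_one i := by rw [real_inner_comm, hd.inner_eq_one]

theorem IsIdentityDecomposition.exists_erase_left {m : ℕ} {u v : Fin (m + 1) → V}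
    {a : Fin (m + 1) → ℝ} (hd : IsIdentityDecomposition u v a) {k : Fin (m + 1)}
    {w : Fin m → ℝ} (hw₀ : ∀ i, 0 ≤ w i) (hw₁ : ∑ i, w i = 1)
    (hwu : ∑ i, w i • u (k.succAbove i) = u k) (hle : ∀ j, ⟪u j, v k⟫ ≤ 1) :
    ∃ (v' : Fin m → V) (b : Fin m → ℝ), IsIdentityDecomposition (u ∘ k.succAbove) v' b ∧
      ∀ i, v' i ∈ segment ℝ (v (k.succAbove i)) (v k) := by
  set σ := k.succAbove
  set b : Fin m → ℝ := fun i ↦ a (σ i) + w i * a k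
  have hb : ∀ i, 0 < b i :=
    fun i ↦ add_pos_of_pos_of_nonneg (hd.pos _) (mul_nonneg (hw₀ i) (hd.pos k).le)
  -- `(a k * ⟪x, v k⟫) • u k = ∑ i, (w i * a k * ⟪x, v k⟫) • u (σ i)` is absorbed into the others
  set v' : Fin m → V := fun i ↦ (b i)⁻¹ • (a (σ i) • v (σ i) + (w i * a k) • v k)
  have hbv : ∀ i, b i • v' i = a (σ i) • v (σ i) + (w i * a k) • v k :=
    fun i ↦ smul_inv_smul₀ (hb i).ne' _
  have hcontact : ∀ i, w i * ⟪u (σ i), v k⟫ = w i := by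
    refine mul_eq_of_sum_mul_eq_one hw₀ hw₁ (fun i ↦ hle _) ?_
    simp only [← real_inner_smul_left, ← sum_inner, hwu, hd.inner_eq_one]
  refine ⟨v', b, ⟨hb, fun x ↦ ?_, ?_, ?_, fun i ↦ ?_⟩, fun i ↦ ?_⟩
  · have hterm : ∀ i, (b i * ⟪x, v' i⟫) • u (σ i) =
        (a (σ i) * ⟪x, v (σ i)⟫) • u (σ i) + (a k * ⟪x, v k⟫) • (w i • u (σ i)) := by
      intro i
      rw [← real_inner_smul_right, hbv, inner_add_right, real_inner_smul_right,
        real_inner_smul_right, add_smul, smul_smul]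
      ring_nf
    rw [Function.comp_def, Finset.sum_congr rfl fun i _ ↦ hterm i, Finset.sum_add_distrib,
      ← Finset.smul_sum, hwu, add_comm, ← Fin.sum_univ_succAbove (fun j ↦ (a j * ⟪x, v j⟫) • u j) k]
    exact hd.eq_sum x
  · have hterm : ∀ i, b i • u (σ i) = a (σ i) • u (σ i) + a k • (w i • u (σ i)) := by
      intro i; simp only [b, add_smul, smul_smul, mul_comm]
    simp only [Function.comp_apply, hterm, Finset.sum_add_distrib, ← Finset.smul_sum, hwu]
    rw [add_comm, ← Fin.sum_univ_succAbove (fun j ↦ a j • u j) k, hd.sum_smul_left]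
  · simp only [hbv, Finset.sum_add_distrib, ← Finset.sum_smul, ← Finset.sum_mul, hw₁, one_mul]
    rw [add_comm, ← Fin.sum_univ_succAbove (fun j ↦ a j • v j) k, hd.sum_smul_right]
  · refine mul_left_cancel₀ (hb i).ne' ?_
    rw [Function.comp_apply, ← real_inner_smul_right, hbv, inner_add_right,
      real_inner_smul_right, real_inner_smul_right, hd.inner_eq_one, mul_comm (w i), mul_assoc,
      hcontact]
    ring
  · refine ⟨a (σ i) / b i, w i * a k / b i, ?_, ?_, ?_, ?_⟩
    · exact div_nonneg (hd.pos _).le (hb i).le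
    · exact div_nonneg (mul_nonneg (hw₀ i) (hd.pos k).le) (hb i).le
    · rw [← add_div, div_self (hb i).ne']
    · simp only [v', smul_add, smul_smul, div_eq_inv_mul]

end InnerProductSpace

theorem polarBody_eq_biInter {n : ℕ} (S : Set (E n)) :
    polarBody S = ⋂ y ∈ S, {x | ⟪y, x⟫ ≤ 1} := by
  ext x; simp [polarBody, real_inner_comm]

theorem isClosed_polarBody {n : ℕ} (S : Set (E n)) : IsClosed (polarBody S) :=
  polarBody_eq_biInter S ▸ isClosed_biInter fun _ _ ↦
    isClosed_le (continuous_const.inner continuous_id) continuous_const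

theorem convex_polarBody {n : ℕ} (S : Set (E n)) : Convex ℝ (polarBody S) :=
  polarBody_eq_biInter S ▸
    convex_iInter₂ fun y _ ↦ convex_halfSpace_le (innerₛₗ ℝ y).isLinear 1

theorem mem_frontier_polarBody {n : ℕ} {S : Set (E n)} {x y : E n} (hx : x ∈ S)
    (hy : y ∈ polarBody S) (hxy : ⟪x, y⟫ = 1) : y ∈ frontier (polarBody S) :=
  mem_frontier_of_inner_le_one (isClosed_polarBody S) hy (fun _ hz ↦ hz x hx)
    (by rwa [real_inner_comm])

theorem mem_frontier_of_mem_polarBody {n : ℕ} {S : Set (E n)} (hS : IsClosed S) {x y : E n}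
    (hx : x ∈ S) (hy : y ∈ polarBody S) (hxy : ⟪x, y⟫ = 1) : x ∈ frontier S :=
  mem_frontier_of_inner_le_one hS hx (fun z hz ↦ real_inner_comm z y ▸ hy z hz) hxy

theorem isJohnData_iff {n m : ℕ} {K L : Set (E n)} {u v : Fin m → E n} {a : Fin m → ℝ} :
    IsJohnData K L u v a ↔ (∀ i, u i ∈ frontier K ∩ frontier L) ∧
      (∀ i, v i ∈ frontier (polarBody K) ∩ frontier (polarBody L)) ∧
      IsIdentityDecomposition u v a :=
  ⟨fun ⟨hu, hv, hpos, hsum, hsu, hsv, h1⟩ ↦ ⟨hu, hv, hpos, hsum, hsu, hsv, h1⟩,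
    fun ⟨hu, hv, hpos, hsum, hsu, hsv, h1⟩ ↦ ⟨hu, hv, hpos, hsum, hsu, hsv, h1⟩⟩

section JohnData

variable {n m : ℕ} {K L : Set (E n)} {u v : Fin (m + 1) → E n} {a : Fin (m + 1) → ℝ}
  {k : Fin (m + 1)}

theorem IsJohnData.exists_erase_left (hK : IsClosed K) (hL : IsClosed L)
    (hd : IsJohnData K L u v a) (hk : u k ∈ convexHull ℝ (u '' {k}ᶜ)) :
    ∃ (v' : Fin m → E n) (b : Fin m → ℝ), IsJohnData K L (u ∘ k.succAbove) v' b := by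
  obtain ⟨hu, hv, hd⟩ := isJohnData_iff.1 hd
  rw [← Fin.range_succAbove, ← range_comp] at hk
  obtain ⟨w, hw₀, hw₁, hwu⟩ := exists_weights_of_mem_convexHull_range hk
  have huK j : u j ∈ K := hK.frontier_subset (hu j).1
  have huL j : u j ∈ L := hL.frontier_subset (hu j).2
  have hvK j : v j ∈ polarBody K := (isClosed_polarBody K).frontier_subset (hv j).1
  have hvL j : v j ∈ polarBody L := (isClosed_polarBody L).frontier_subset (hv j).2
  obtain ⟨v', b, hd', hseg⟩ := hd.exists_erase_left hw₀ hw₁ hwu fun j ↦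
    real_inner_comm (v k) (u j) ▸ hvK k _ (huK j)
  refine ⟨v', b, isJohnData_iff.2 ⟨fun i ↦ hu _, fun i ↦ ⟨?_, ?_⟩, hd'⟩⟩
  · exact mem_frontier_polarBody (huK _)
      ((convex_polarBody K).segment_subset (hvK _) (hvK k) (hseg i)) (hd'.inner_eq_one i)
  · exact mem_frontier_polarBody (huL _)
      ((convex_polarBody L).segment_subset (hvL _) (hvL k) (hseg i)) (hd'.inner_eq_one i)

theorem IsJohnData.exists_erase_right (hK : IsClosed K) (hKc : Convex ℝ K) (hL : IsClosed L)
    (hLc : Convex ℝ L) (hd : IsJohnData K L u v a) (hk : v k ∈ convexHull ℝ (v '' {k}ᶜ)) :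
    ∃ (u' : Fin m → E n) (b : Fin m → ℝ), IsJohnData K L u' (v ∘ k.succAbove) b := by
  obtain ⟨hu, hv, hd⟩ := isJohnData_iff.1 hd
  rw [← Fin.range_succAbove, ← range_comp] at hk
  obtain ⟨w, hw₀, hw₁, hwv⟩ := exists_weights_of_mem_convexHull_range hk
  have huK j : u j ∈ K := hK.frontier_subset (hu j).1
  have huL j : u j ∈ L := hL.frontier_subset (hu j).2
  have hvK j : v j ∈ polarBody K := (isClosed_polarBody K).frontier_subset (hv j).1
  have hvL j : v j ∈ polarBody L := (isClosed_polarBody L).frontier_subset (hv j).2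
  obtain ⟨u', b, hd', hseg⟩ := hd.symm.exists_erase_left hw₀ hw₁ hwv fun j ↦ hvK j _ (huK k)
  refine ⟨u', b, isJohnData_iff.2 ⟨fun i ↦ ⟨?_, ?_⟩, fun i ↦ hv _, hd'.symm⟩⟩
  · exact mem_frontier_of_mem_polarBody hK (hKc.segment_subset (huK _) (huK k) (hseg i))
      (hvK _) (hd'.symm.inner_eq_one i)
  · exact mem_frontier_of_mem_polarBody hL (hLc.segment_subset (huL _) (huL k) (hseg i))
      (hvL _) (hd'.symm.inner_eq_one i)

end JohnData

theorem IsJohnData.exists_lt_of_mem_convexHull {n m : ℕ} {K L : Set (E n)} (hK : IsClosed K)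
    (hKc : Convex ℝ K) (hL : IsClosed L) (hLc : Convex ℝ L) {u v : Fin m → E n}
    {a : Fin m → ℝ} (hd : IsJohnData K L u v a) {k : Fin m}
    (hk : u k ∈ convexHull ℝ (u '' {k}ᶜ) ∨ v k ∈ convexHull ℝ (v '' {k}ᶜ)) :
    ∃ m' < m, 0 < m' ∧
      ∃ (u' v' : Fin m' → E n) (a' : Fin m' → ℝ), IsJohnData K L u' v' a' := by
  obtain ⟨m, rfl⟩ := Nat.exists_eq_succ_of_ne_zero k.pos.ne'
  have hm : 0 < m := Nat.pos_of_ne_zero <| by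
    rintro rfl
    simp [← Fin.range_succAbove] at hk
  refine ⟨m, m.lt_succ_self, hm, ?_⟩
  rcases hk with hk | hk
  · obtain ⟨v', b, hd'⟩ := hd.exists_erase_left hK hL hk
    exact ⟨_, v', b, hd'⟩
  · obtain ⟨u', b, hd'⟩ := hd.exists_erase_right hK hKc hL hLc hk
    exact ⟨u', _, b, hd'⟩

/-- If `K ⊆ L` are convex bodies in `ℝⁿ` in John's position, then the contact
pairs `(u i, v i)` can be chosen so that no `u i` lies in the convex hull of
the other `u j`'s and no `v i` lies in the convex hull of the other
`v j`'s. -/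
theorem stmt7 (n : ℕ) (K L : Set (E n)) (hK : IsConvexBody K)
    (hL : IsConvexBody L) (hJ : IsJohnPosition K L) :
    ∃ (m : ℕ), 0 < m ∧ ∃ (u v : Fin m → E n) (a : Fin m → ℝ),
      IsJohnData K L u v a ∧
      (∀ i, u i ∉ convexHull ℝ (u '' {i}ᶜ)) ∧
      (∀ i, v i ∉ convexHull ℝ (v '' {i}ᶜ)) := by
  classical
  obtain ⟨-, hex⟩ := hJ
  obtain ⟨hm, u, v, a, hd⟩ := Nat.find_spec hex
  have hmin k (hk : u k ∈ convexHull ℝ (u '' {k}ᶜ) ∨ v k ∈ convexHull ℝ (v '' {k}ᶜ)) :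
      False := by
    obtain ⟨m', hlt, hm', hd'⟩ :=
      hd.exists_lt_of_mem_convexHull hK.1.isClosed hK.2.1 hL.1.isClosed hL.2.1 hk
    exact Nat.find_min hex hlt ⟨hm', hd'⟩
  exact ⟨_, hm, u, v, a, hd, fun k hk ↦ hmin k (.inl hk), fun k hk ↦ hmin k (.inr hk)⟩
end
end

section
/- For all centrally symmetric convex bodies K, L in R^n, d(K, L) ≤ n. -/
open Pointwise

noncomputable section

/-!
By John's theorem, the maximal-volume ellipsoid `T(B)` inside a symmetric body `K` satisfies
`T(B) ⊆ K ⊆ √n • T(B)`. If some `T z ∈ K` had `‖z‖ > √n`, then `K ⊇ conv (T(B) ∪ {±T z})` would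
contain the image under `T` of the ball stretched by `a` along `z` and by `b ≤ 1` orthogonally to
it, and `a`, `b` can be chosen with `a b^(n-1) > 1`, contradicting maximality. Centring `K` and `L`
and composing their John maps gives `K ⊆ √n • T_K T_L⁻¹ L ⊆ n • K`.
-/

open Module Metric Set
open scoped RealInnerProductSpace

section Stretch

variable {V : Type*} [NormedAddCommGroup V] [InnerProductSpace ℝ V]

/-- For a unit vector `w`: scaling by `a` along `w` and by `b` on the orthogonal complement. -/
def stretch (w : V) (a b : ℝ) : V →L[ℝ] V :=
  b • ContinuousLinearMap.id ℝ V + (a - b) • (innerSL ℝ w).smulRight w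

variable {w : V} {a b : ℝ}

theorem stretch_apply (x : V) : stretch w a b x = b • x + ((a - b) * ⟪w, x⟫) • w := by
  simp [stretch, mul_smul]

theorem inner_stretch_left (x y : V) : ⟪stretch w a b x, y⟫ = ⟪x, stretch w a b y⟫ := by
  simp only [stretch_apply, inner_add_left, inner_add_right, real_inner_smul_left,
    real_inner_smul_right, real_inner_comm w]
  ring

theorem norm_stretch_sq (hw : ‖w‖ = 1) (x : V) :
    ‖stretch w a b x‖ ^ 2 = b ^ 2 * ‖x‖ ^ 2 + (a ^ 2 - b ^ 2) * ⟪w, x⟫ ^ 2 := by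
  rw [← real_inner_self_eq_norm_sq, ← real_inner_self_eq_norm_sq]
  simp only [stretch_apply, inner_add_left, inner_add_right, real_inner_smul_left,
    real_inner_smul_right, real_inner_self_eq_norm_sq w, hw, real_inner_comm x w]
  ring

/-- When `b² ≤ a²`, the bound is the convex combination `b² ‖x‖² + (1 - b²) (R ⟪w, x⟫)²`. -/
theorem norm_stretch_sq_le (hw : ‖w‖ = 1) (hb : b ^ 2 ≤ 1) {R : ℝ}
    (hab : a ^ 2 + b ^ 2 * (R ^ 2 - 1) ≤ R ^ 2) (x : V) :
    ‖stretch w a b x‖ ^ 2 ≤ max (‖x‖ ^ 2) ((R * ⟪w, x⟫) ^ 2) := by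
  have hwx : ⟪w, x⟫ ^ 2 ≤ ‖x‖ ^ 2 := by
    simpa [hw] using pow_le_pow_left₀ (abs_nonneg _) (abs_real_inner_le_norm w x) 2
  rw [norm_stretch_sq hw]
  set M := max (‖x‖ ^ 2) ((R * ⟪w, x⟫) ^ 2)
  have hxM : ‖x‖ ^ 2 ≤ M := le_max_left _ _
  have hwM : R ^ 2 * ⟪w, x⟫ ^ 2 ≤ M := by rw [← mul_pow]; exact le_max_right _ _
  have hb0 : 0 ≤ b ^ 2 := sq_nonneg b
  rcases le_total (a ^ 2) (b ^ 2) with h | h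
  · nlinarith [sq_nonneg ⟪w, x⟫]
  · nlinarith [mul_le_mul_of_nonneg_right hab (sq_nonneg ⟪w, x⟫)]

theorem det_stretch [FiniteDimensional ℝ V] (hw : ‖w‖ = 1) :
    (stretch w a b).det = a * b ^ (finrank ℝ V - 1) := by
  have hpos : 0 < finrank ℝ V :=
    finrank_pos_iff_exists_ne_zero.2 ⟨w, by simp [← norm_ne_zero_iff, hw]⟩
  have hcard : finrank ℝ V = Fintype.card (Option (Fin (finrank ℝ V - 1))) := by
    simp only [Fintype.card_option, Fintype.card_fin]
    omega
  have hw1 : Orthonormal ℝ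
      (({none} : Set (Option (Fin (finrank ℝ V - 1)))).domRestrict fun _ => w) := by
    rw [orthonormal_iff_ite]
    rintro ⟨i, rfl⟩ ⟨j, rfl⟩
    simp [Set.domRestrict, hw]
  obtain ⟨o, ho⟩ := hw1.exists_orthonormalBasis_extension_of_card_eq hcard
  have how : o none = w := ho none rfl
  have hmat : LinearMap.toMatrix o.toBasis o.toBasis (stretch w a b).toLinearMap =
      Matrix.diagonal fun i => Option.elim i a fun _ => b := by
    ext i j
    rw [LinearMap.toMatrix_apply, OrthonormalBasis.coe_toBasis,
      OrthonormalBasis.coe_toBasis_repr_apply, OrthonormalBasis.repr_apply_apply,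
      ContinuousLinearMap.coe_coe, stretch_apply, ← how]
    simp only [inner_add_right, real_inner_smul_right, orthonormal_iff_ite.1 o.orthonormal]
    rcases i with _ | i <;> rcases j with _ | j <;> simp [Matrix.diagonal_apply]
  rw [ContinuousLinearMap.det, ← LinearMap.det_toMatrix o.toBasis, hmat, Matrix.det_diagonal,
    Fintype.prod_option]
  simp

/-- The stretched ball lies in the convex hull of the unit ball and `±R • w`; this is checked
against every separating functional `⟪d, ·⟫`, using `‖stretch w a b d‖ ≤ max ‖d‖ |R ⟪w, d⟫|`. -/
theorem stretch_image_closedBall_subset [CompleteSpace V] {K : Set V} (hKv : Convex ℝ K)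
    (hKc : IsClosed K) (hBK : closedBall (0 : V) 1 ⊆ K) (hw : ‖w‖ = 1) {R : ℝ}
    (hRw : R • w ∈ K) (hRw' : -(R • w) ∈ K) (hb : b ^ 2 ≤ 1)
    (hab : a ^ 2 + b ^ 2 * (R ^ 2 - 1) ≤ R ^ 2) :
    stretch w a b '' closedBall 0 1 ⊆ K := by
  rintro _ ⟨y, hy, rfl⟩
  by_contra hyK
  obtain ⟨f, t, hfK, htf⟩ := geometric_hahn_banach_closed_point hKv hKc hyK
  set d := (InnerProductSpace.toDual ℝ V).symm f
  have hf : ∀ x, f x = ⟪d, x⟫ := fun x => InnerProductSpace.toDual_symm_apply.symm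
  have ht : 0 ≤ t := by simpa using (hfK 0 (hBK (mem_closedBall_self zero_le_one))).le
  have hd : ‖d‖ ≤ t := by
    rw [LinearIsometryEquiv.norm_map]
    refine f.opNorm_le_of_unit_norm ht fun x hx => abs_le.2 ⟨?_, (hfK x (hBK ?_)).le⟩
    · have := hfK (-x) (hBK (by simp [hx]))
      rw [map_neg] at this
      linarith
    · simp [hx]
  have hdw : |R * ⟪w, d⟫| ≤ t := by
    have h₁ := hfK _ hRw
    have h₂ := hfK _ hRw'
    rw [hf, real_inner_smul_right] at h₁
    rw [hf, inner_neg_right, real_inner_smul_right] at h₂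
    rw [real_inner_comm]
    exact abs_le.2 ⟨by linarith, h₁.le⟩
  have hSd : ‖stretch w a b d‖ ≤ t := by
    refine le_of_pow_le_pow_left₀ two_ne_zero ht ((norm_stretch_sq_le hw hb hab d).trans ?_)
    exact max_le (pow_le_pow_left₀ (norm_nonneg _) hd 2)
      (sq_le_sq' (abs_le.1 hdw).1 (abs_le.1 hdw).2)
  have : f (stretch w a b y) ≤ t := calc
    f (stretch w a b y) = ⟪stretch w a b d, y⟫ := by rw [hf, inner_stretch_left]
    _ ≤ ‖stretch w a b d‖ * ‖y‖ := real_inner_le_norm _ _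
    _ ≤ t := (mul_le_of_le_one_right (norm_nonneg _) (mem_closedBall_zero_iff.1 hy)).trans hSd
  linarith

end Stretch

/-- With `a² = R² / (m + 1)` and `b² = 1 - x`, Bernoulli's inequality `(1 - x) ^ m ≥ 1 - m x`
reduces `1 < (a b^m)²` to `0 < (R² - (m + 1))²`. -/
theorem exists_stretch_params {m : ℕ} {R : ℝ} (hR : m + 1 < R ^ 2) :
    ∃ a b : ℝ, b ^ 2 ≤ 1 ∧ a ^ 2 + b ^ 2 * (R ^ 2 - 1) ≤ R ^ 2 ∧ 1 < a * b ^ m := by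
  have hm : (0 : ℝ) ≤ m := m.cast_nonneg
  have hR1 : 0 < R ^ 2 - 1 := by linarith
  set x := (R ^ 2 - (m + 1)) / ((m + 1) * (R ^ 2 - 1))
  have hx0 : 0 ≤ x := by positivity
  have hx1 : x ≤ 1 := by
    rw [div_le_one (by positivity)]
    nlinarith
  have ha : √(R ^ 2 / (m + 1)) ^ 2 = R ^ 2 / (m + 1) := Real.sq_sqrt (by positivity)
  have hb : √(1 - x) ^ 2 = 1 - x := Real.sq_sqrt (by linarith)
  refine ⟨√(R ^ 2 / (m + 1)), √(1 - x), by linarith, le_of_eq ?_, ?_⟩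
  · rw [ha, hb]
    simp only [x]
    field_simp
    ring
  have hbern : 1 - m * x ≤ (1 - x) ^ m := by
    simpa [sub_eq_add_neg] using one_add_mul_le_pow (a := -x) (by linarith) m
  have hgap : R ^ 2 / (m + 1) * (1 - m * x) - 1 =
      (R ^ 2 - (m + 1)) ^ 2 / ((m + 1) ^ 2 * (R ^ 2 - 1)) := by
    simp only [x]
    field_simp
    ring
  have hgap_pos : 0 < (R ^ 2 - (m + 1)) ^ 2 / ((m + 1) ^ 2 * (R ^ 2 - 1)) := by
    have : R ^ 2 - (m + 1) ≠ 0 := by linarith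
    positivity
  rw [← one_lt_sq_iff₀ (by positivity), mul_pow, ha, ← pow_mul, pow_mul', hb]
  calc (1 : ℝ) < R ^ 2 / (m + 1) * (1 - m * x) := by linarith
    _ ≤ R ^ 2 / (m + 1) * (1 - x) ^ m := by gcongr

section MaximalDet

variable {V : Type*} [NormedAddCommGroup V] [NormedSpace ℝ V] [FiniteDimensional ℝ V]

theorem isCompact_setOf_image_closedBall_subset {K : Set V} (hK : IsCompact K) :
    IsCompact {T : V →L[ℝ] V | T '' closedBall 0 1 ⊆ K} := by
  have hclosed : IsClosed {T : V →L[ℝ] V | T '' closedBall 0 1 ⊆ K} := by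
    have : {T : V →L[ℝ] V | T '' closedBall 0 1 ⊆ K} =
        ⋂ y ∈ closedBall (0 : V) 1, {T | T y ∈ K} := by
      ext T
      simp [subset_def]
    rw [this]
    exact isClosed_biInter fun y _ => hK.isClosed.preimage (continuous_eval_const y)
  obtain ⟨C, hC0, hC⟩ := hK.isBounded.exists_pos_norm_le
  refine Metric.isCompact_of_isClosed_isBounded hclosed (isBounded_iff_forall_norm_le.2 ⟨C, ?_⟩)
  exact fun T hT => T.opNorm_le_of_unit_norm hC0.le fun x hx =>
    hC _ (hT (mem_image_of_mem T (mem_closedBall_zero_iff.2 hx.le)))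

theorem exists_max_abs_det_image_closedBall_subset {K : Set V} (hKc : IsCompact K) (hK0 : (0 : V) ∈ interior K) :
    ∃ T : V →L[ℝ] V, T '' closedBall 0 1 ⊆ K ∧ T.det ≠ 0 ∧
      ∀ S : V →L[ℝ] V, S '' closedBall 0 1 ⊆ K → |S.det| ≤ |T.det| := by
  obtain ⟨ε, hε, hεK⟩ := nhds_basis_closedBall.mem_iff.1 (mem_interior_iff_mem_nhds.1 hK0)
  have hεmem : (ε • ContinuousLinearMap.id ℝ V) '' closedBall 0 1 ⊆ K := by
    rintro _ ⟨y, hy, rfl⟩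
    apply hεK
    simpa [norm_smul, abs_of_pos hε] using
      mul_le_of_le_one_right hε.le (mem_closedBall_zero_iff.1 hy)
  obtain ⟨T, hT, hmax⟩ := (isCompact_setOf_image_closedBall_subset hKc).exists_isMaxOn
    ⟨_, hεmem⟩ ContinuousLinearMap.continuous_det.abs.continuousOn
  refine ⟨T, hT, fun h0 => ?_, fun S hS => hmax hS⟩
  have : |(ε • ContinuousLinearMap.id ℝ V).det| ≤ |T.det| := hmax hεmem
  simp only [h0, ContinuousLinearMap.det, ContinuousLinearMap.toLinearMap_smul,
    ContinuousLinearMap.coe_id, LinearMap.det_smul, LinearMap.det_id, mul_one, abs_zero] at this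
  exact (pow_pos hε _).ne' (abs_nonpos_iff.1 this)

end MaximalDet

theorem zero_mem_interior_of_neg_mem {M : Type*} [AddCommGroup M] [Module ℝ M]
    [TopologicalSpace M] [IsTopologicalAddGroup M] [ContinuousConstSMul ℝ M] {K : Set M}
    (hKv : Convex ℝ K) (hKi : (interior K).Nonempty) (hKs : ∀ x ∈ K, -x ∈ K) :
    (0 : M) ∈ interior K := by
  obtain ⟨p, hp⟩ := hKi
  have hp' : -p ∈ interior K :=
    interior_maximal (fun x hx => by simpa using hKs _ (interior_subset (mem_neg.1 hx)))
      isOpen_interior.neg (by simpa using hp)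
  simpa using hKv.interior hp hp' (by norm_num : (0 : ℝ) ≤ 1 / 2)
    (by norm_num : (0 : ℝ) ≤ 1 / 2) (by norm_num)

/-- **John's theorem** for symmetric convex bodies, with `T (closedBall 0 1)` the ellipsoid of
maximal volume in `K`. -/
theorem exists_linearEquiv_image_closedBall_subset_subset {V : Type*} [NormedAddCommGroup V]
    [InnerProductSpace ℝ V] [FiniteDimensional ℝ V] {K : Set V} (hKc : IsCompact K)
    (hKv : Convex ℝ K) (hKi : (interior K).Nonempty) (hKs : ∀ x ∈ K, -x ∈ K) :
    ∃ T : V ≃ₗ[ℝ] V, T '' closedBall 0 1 ⊆ K ∧ K ⊆ T '' closedBall 0 √(finrank ℝ V) := by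
  obtain ⟨T, hTK, hT0, hTmax⟩ :=
    exists_max_abs_det_image_closedBall_subset hKc (zero_mem_interior_of_neg_mem hKv hKi hKs)
  set T' := (T.toContinuousLinearEquivOfDetNeZero hT0).toLinearEquiv
  refine ⟨T', hTK, fun x hx => ?_⟩
  rw [LinearEquiv.image_eq_preimage_symm, mem_preimage, mem_closedBall_zero_iff]
  by_contra! hR
  set z := T'.symm x
  have hz : T z = x := T'.apply_symm_apply x
  have hR0 : 0 < ‖z‖ := (Real.sqrt_nonneg _).trans_lt hR
  set w := ‖z‖⁻¹ • z
  have hw : ‖w‖ = 1 := by simp [w, norm_smul, hR0.ne']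
  have hzw : ‖z‖ • w = z := by simp [w, smul_smul, hR0.ne']
  have hn : 0 < finrank ℝ V := finrank_pos_iff_exists_ne_zero.2 ⟨z, norm_pos_iff.1 hR0⟩
  have hRn : ((finrank ℝ V - 1 : ℕ) : ℝ) + 1 < ‖z‖ ^ 2 := by
    rw [Nat.cast_pred hn, sub_add_cancel]
    exact (Real.sqrt_lt' hR0).1 hR
  obtain ⟨a, b, hb, hab, hdet⟩ := exists_stretch_params hRn
  have hS : stretch w a b '' closedBall 0 1 ⊆ T ⁻¹' K :=
    stretch_image_closedBall_subset (hKv.linear_preimage T.toLinearMap)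
      (hKc.isClosed.preimage T.continuous) (image_subset_iff.1 hTK) hw
      (by rwa [hzw, mem_preimage, hz]) (by rw [hzw, mem_preimage, map_neg, hz]; exact hKs x hx)
      hb hab
  have hle := hTmax (T ∘L stretch w a b) (by
    rw [ContinuousLinearMap.coe_comp, image_comp]
    exact image_subset_iff.2 hS)
  rw [ContinuousLinearMap.det, ContinuousLinearMap.toLinearMap_comp, LinearMap.det_comp,
    ← ContinuousLinearMap.det, ← ContinuousLinearMap.det, det_stretch hw, abs_mul] at hle
  nlinarith [abs_pos.2 hT0, le_abs_self (a * b ^ (finrank ℝ V - 1))]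

/-- The witness is `T = s • T₁ T₂⁻¹`. -/
theorem exists_linearEquiv_subset_image_subset_smul {V : Type*} [NormedAddCommGroup V]
    [NormedSpace ℝ V] {K L : Set V} {s : ℝ} (hs : 0 < s) {T₁ T₂ : V ≃ₗ[ℝ] V}
    (hK₁ : T₁ '' closedBall 0 1 ⊆ K) (hK₂ : K ⊆ T₁ '' closedBall 0 s)
    (hL₁ : T₂ '' closedBall 0 1 ⊆ L) (hL₂ : L ⊆ T₂ '' closedBall 0 s) :
    ∃ T : V ≃ₗ[ℝ] V, K ⊆ (T : V →ₗ[ℝ] V) '' L ∧ (T : V →ₗ[ℝ] V) '' L ⊆ (s * s) • K := by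
  have hball : closedBall (0 : V) s = s • closedBall 0 1 := by
    rw [smul_unitClosedBall, Real.norm_of_nonneg hs.le]
  set A := T₂.symm.trans T₁
  have hA : ∀ t, A '' (T₂ '' t) = T₁ '' t := fun t => by
    rw [← image_comp]
    congr 1
    ext
    simp [A]
  refine ⟨A.trans (LinearEquiv.smulOfNeZero ℝ V s hs.ne'), ?_⟩
  have hT : ((A.trans (LinearEquiv.smulOfNeZero ℝ V s hs.ne') : V ≃ₗ[ℝ] V) : V →ₗ[ℝ] V) '' L =
      s • A '' L := by
    rw [← image_smul, ← image_comp]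
    rfl
  rw [hT]
  constructor
  · calc K ⊆ T₁ '' closedBall 0 s := hK₂
      _ = s • A '' (T₂ '' closedBall 0 1) := by rw [hball, image_smul_set, hA]
      _ ⊆ s • A '' L := by gcongr
  · calc s • A '' L ⊆ s • A '' (T₂ '' closedBall 0 s) := by gcongr
      _ = (s * s) • T₁ '' closedBall 0 1 := by rw [hA, hball, image_smul_set, smul_smul]
      _ ⊆ (s * s) • K := by gcongr

theorem IsConvexBody.vadd {n : ℕ} {K : Set (E n)} (hK : IsConvexBody K) (v : E n) :
    IsConvexBody (v +ᵥ K) := by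
  refine ⟨?_, hK.2.1.vadd v, ?_⟩
  · rw [← image_vadd]
    exact hK.1.image (continuous_const_vadd v)
  · rw [interior_vadd]
    exact hK.2.2.vadd_set

theorem neg_mem_neg_vadd_of_symmetric {M : Type*} [AddCommGroup M] [Module ℝ M] {K : Set M}
    {c : M} (hc : ∀ x, x ∈ K ↔ (2 : ℝ) • c - x ∈ K) : ∀ x ∈ -c +ᵥ K, -x ∈ -c +ᵥ K := by
  intro x hx
  rw [mem_vadd_set_iff_neg_vadd_mem, neg_neg, vadd_eq_add] at hx ⊢
  convert (hc _).1 hx using 1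
  module

theorem bmDist_eq_zero_of_dim_zero {K L : Set (E 0)} (hK : K.Nonempty) (hL : L.Nonempty) :
    bmDist K L = 0 := by
  have hsub : ∀ s t : Set (E 0), t.Nonempty → s ⊆ t := fun s t ⟨y, hy⟩ x _ => by
    rwa [Subsingleton.elim x y]
  have : {r : ℝ | 0 < r ∧ ∃ (T : E 0 ≃ₗ[ℝ] E 0) (u v : E 0),
      (u +ᵥ K) ⊆ (T : E 0 →ₗ[ℝ] E 0) '' (v +ᵥ L) ∧
      (T : E 0 →ₗ[ℝ] E 0) '' (v +ᵥ L) ⊆ r • (u +ᵥ K)} = Ioi 0 := by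
    ext r
    refine ⟨And.left, fun hr => ⟨hr, LinearEquiv.refl ℝ _, 0, 0, hsub _ _ ?_, hsub _ _ ?_⟩⟩
    · exact hL.vadd_set.image _
    · exact hK.vadd_set.smul_set
  rw [bmDist, this, csInf_Ioi]

/-- For all centrally symmetric convex bodies `K, L ⊆ ℝⁿ`, `d(K, L) ≤ n`. -/
theorem stmt15 (n : ℕ) (K L : Set (E n)) (hK : IsConvexBody K)
    (hL : IsConvexBody L) (hKsym : IsCentrallySymmetric K)
    (hLsym : IsCentrallySymmetric L) :
    bmDist K L ≤ n := by
  obtain ⟨cK, hcK⟩ := hKsym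
  obtain ⟨cL, hcL⟩ := hLsym
  rcases Nat.eq_zero_or_pos n with rfl | hn
  · simpa using (bmDist_eq_zero_of_dim_zero (hK.2.2.mono interior_subset)
      (hL.2.2.mono interior_subset)).le
  obtain ⟨hK₀c, hK₀v, hK₀i⟩ := hK.vadd (-cK)
  obtain ⟨hL₀c, hL₀v, hL₀i⟩ := hL.vadd (-cL)
  obtain ⟨TK, hTK₁, hTK₂⟩ := exists_linearEquiv_image_closedBall_subset_subset hK₀c hK₀v hK₀i
    (neg_mem_neg_vadd_of_symmetric hcK)
  obtain ⟨TL, hTL₁, hTL₂⟩ := exists_linearEquiv_image_closedBall_subset_subset hL₀c hL₀v hL₀i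
    (neg_mem_neg_vadd_of_symmetric hcL)
  obtain ⟨T, hKT, hTLK⟩ := exists_linearEquiv_subset_image_subset_smul
    (Real.sqrt_pos.2 (by simpa using hn)) hTK₁ hTK₂ hTL₁ hTL₂
  rw [finrank_euclideanSpace_fin, Real.mul_self_sqrt n.cast_nonneg] at hTLK
  exact csInf_le ⟨0, fun r hr => hr.1.le⟩ ⟨Nat.cast_pos.2 hn, T, -cK, -cL, hKT, hTLK⟩
end
end
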